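/- If f ∈ L²(ℝⁿ, Lebesgue) and (φ_k) is a sequence of Schwartz functions with φ_k → f in L²(ℝⁿ), then the sequence of random variables (⟨·,φ_k⟩)_k is a Cauchy sequence in L²(Ω,P); moreover, if (ψ_k) is another sequence of Schwartz functions converging to f in L²(ℝⁿ), then the L²(P)-limits of (⟨·,φ_k⟩) and (⟨·,ψ_k⟩) coincide (as elements of L²(Ω,P)). -/

import Mathlib

open MeasureTheory Complex

noncomputable section

/-- The space ℝⁿ. -/
abbrev En (n : ℕ) := EuclideanSpace ℝ (Fin n)

/-- The white noise probability space Ω = 𝒮'(ℝⁿ), the space of tempered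
distributions (the continuous dual of the Schwartz space), with the weak* topology. -/
abbrev WNSpace (n : ℕ) := WeakDual ℝ (SchwartzMap (En n) ℝ)

/-- The Borel σ-algebra on Ω. -/
instance (n : ℕ) : MeasurableSpace (WNSpace n) := borel _

/-- The Lévy exponent Ψ(w) = ∫ (e^{iwz} − 1 − iwz) ν(dz). -/
def levyExponent (ν : Measure ℝ) (w : ℝ) : ℂ :=
  ∫ z : ℝ, (Complex.exp (Complex.I * w * z) - 1 - Complex.I * w * z) ∂ν

/-! For a Schwartz function `θ`, the random variable `X = ⟨·, θ⟩` has characteristic function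
`t ↦ exp (∫ Ψ (t θ x) dx)`, and `‖Ψ w‖ ≤ 2 M w²` gives `Re (1 - E e^{itX}) ≤ 4 M ‖θ‖₂² t²`.
Since `2 (1 - cos (t x)) / t² → x²` as `t → 0`, Fatou's lemma yields `E X² ≤ 8 M ‖θ‖₂²`.
So `θ ↦ ⟨·, θ⟩` is linear and bounded from the `L²(ℝⁿ)`-norm to `L²(P)`, and both claims follow
from `‖⟨·, θ₁⟩ - ⟨·, θ₂⟩‖ ≤ C (‖θ₁ - f‖₂ + ‖θ₂ - f‖₂)`. -/

open Filter Topology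

lemma norm_exp_I_mul_ofReal_sub_one_sub_le (u : ℝ) :
    ‖exp (I * u) - 1 - I * u‖ ≤ 2 * u ^ 2 := by
  have hIu : ‖I * (u : ℂ)‖ = |u| := by simp
  rcases le_or_gt |u| 1 with hu | hu
  · calc ‖exp (I * u) - 1 - I * u‖ ≤ ‖I * (u : ℂ)‖ ^ 2 :=
          norm_exp_sub_one_sub_id_le (hIu.trans_le hu)
      _ = u ^ 2 := by rw [hIu, sq_abs]
      _ ≤ 2 * u ^ 2 := by nlinarith [sq_nonneg u]
  · calc ‖exp (I * u) - 1 - I * u‖ ≤ ‖exp (I * u) - 1‖ + ‖I * (u : ℂ)‖ := norm_sub_le _ _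
      _ ≤ |u| + |u| := by
          rw [hIu]
          gcongr
          simpa using (Real.norm_exp_I_mul_ofReal_sub_one_le (x := u))
      _ ≤ 2 * u ^ 2 := by nlinarith [sq_abs u]

lemma norm_levyExponent_le {ν : Measure ℝ} (hM : Integrable (fun z : ℝ => z ^ 2) ν) (w : ℝ) :
    ‖levyExponent ν w‖ ≤ 2 * w ^ 2 * ∫ z, z ^ 2 ∂ν := by
  rw [← integral_const_mul]
  refine norm_integral_le_of_norm_le (hM.const_mul _) (.of_forall fun z => ?_)
  have h := norm_exp_I_mul_ofReal_sub_one_sub_le (w * z)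
  push_cast at h
  rw [← mul_assoc] at h
  linarith

lemma norm_integral_levyExponent_le {α : Type*} [MeasurableSpace α] {μ : Measure α}
    {ν : Measure ℝ} (hM : Integrable (fun z : ℝ => z ^ 2) ν) {g : α → ℝ}
    (hg : Integrable (fun x => g x ^ 2) μ) :
    ‖∫ x, levyExponent ν (g x) ∂μ‖ ≤ 2 * (∫ z, z ^ 2 ∂ν) * ∫ x, g x ^ 2 ∂μ := by
  rw [← integral_const_mul]
  refine norm_integral_le_of_norm_le (hg.const_mul _) (.of_forall fun x => ?_)
  linarith [norm_levyExponent_le hM (g x)]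

lemma re_one_sub_exp_le {a : ℂ} (ha : ‖exp a‖ ≤ 1) : (1 - exp a).re ≤ 2 * ‖a‖ := by
  rcases le_or_gt ‖a‖ 1 with h | h
  · calc (1 - exp a).re ≤ ‖exp a - 1‖ := by
          rw [← norm_neg, neg_sub]; exact re_le_norm _
      _ ≤ 2 * ‖a‖ := norm_exp_sub_one_le h
  · calc (1 - exp a).re = 1 - (exp a).re := by simp
      _ ≤ 1 + ‖exp a‖ := by linarith [neg_abs_le (exp a).re, abs_re_le_norm (exp a)]
      _ ≤ 2 * ‖a‖ := by linarith

lemma tendsto_two_mul_one_sub_cos_div_sq (x : ℝ) :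
    Tendsto (fun t => 2 * (1 - Real.cos (t * x)) / t ^ 2) (𝓝[≠] 0) (𝓝 (x ^ 2)) := by
  have hsmall : ∀ᶠ t in 𝓝[≠] (0 : ℝ), |t * x| ≤ 1 := by
    refine nhdsWithin_le_nhds ?_
    have : Tendsto (fun t : ℝ => |t * x|) (𝓝 0) (𝓝 0) := by
      simpa using ((continuous_id.mul continuous_const).abs.tendsto (0 : ℝ))
    exact this.eventually (ge_mem_nhds one_pos)
  -- `Real.cos_bound` bounds the error by `(2 / t²) · (5 / 96) (t x)⁴`.
  have hbound : Tendsto (fun t : ℝ => 5 / 48 * x ^ 4 * t ^ 2) (𝓝[≠] 0) (𝓝 0) := by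
    refine tendsto_nhdsWithin_of_tendsto_nhds ?_
    simpa using ((continuous_pow 2).tendsto (0 : ℝ)).const_mul (5 / 48 * x ^ 4)
  refine tendsto_iff_norm_sub_tendsto_zero.2 (squeeze_zero' (.of_forall fun _ => norm_nonneg _)
    ?_ hbound)
  filter_upwards [hsmall, self_mem_nhdsWithin] with t ht ht0
  have ht0 : t ≠ 0 := ht0
  have hcos := Real.cos_bound ht
  have herror : 2 * (1 - Real.cos (t * x)) / t ^ 2 - x ^ 2
      = -(2 / t ^ 2) * (Real.cos (t * x) - (1 - (t * x) ^ 2 / 2)) := by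
    field_simp; ring
  rw [Real.norm_eq_abs, herror, abs_mul, abs_neg, abs_of_pos (by positivity)]
  calc 2 / t ^ 2 * |Real.cos (t * x) - (1 - (t * x) ^ 2 / 2)|
      ≤ 2 / t ^ 2 * (|t * x| ^ 4 * (5 / 96)) := by gcongr
    _ = 5 / 48 * x ^ 4 * t ^ 2 := by
      rw [pow_abs, abs_of_nonneg (by positivity)]; field_simp; ring

lemma integrable_cos_mul {μ : Measure ℝ} [IsFiniteMeasure μ] (t : ℝ) :
    Integrable (fun x => Real.cos (t * x)) μ :=
  (integrable_const (1 : ℝ)).mono' (by fun_prop) (.of_forall fun _ => Real.abs_cos_le_one _)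

lemma integral_one_sub_cos_eq_re_one_sub_charFun {μ : Measure ℝ} [IsProbabilityMeasure μ]
    (t : ℝ) : ∫ x, (1 - Real.cos (t * x)) ∂μ = (1 - charFun μ t).re := by
  have hexp : Integrable (fun x : ℝ => exp (t * x * I)) μ :=
    (integrable_const (1 : ℝ)).mono' (by fun_prop)
      (.of_forall fun x => by rw [← ofReal_mul, norm_exp_ofReal_mul_I])
  have hre := integral_re hexp
  simp only [RCLike.re_to_complex] at hre
  rw [integral_sub (integrable_const 1) (integrable_cos_mul t), sub_re, charFun_apply_real, ← hre]
  simp [← ofReal_mul, exp_ofReal_mul_I_re]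

theorem lintegral_sq_le_of_re_one_sub_charFun_le {μ : Measure ℝ} [IsProbabilityMeasure μ]
    {K : ℝ} (h : ∀ᶠ t in 𝓝[≠] 0, (1 - charFun μ t).re ≤ K * t ^ 2) :
    ∫⁻ x, ‖x‖ₑ ^ 2 ∂μ ≤ ENNReal.ofReal (2 * K) := by
  set g : ℝ → ℝ → ℝ := fun t x => 2 * (1 - Real.cos (t * x)) / t ^ 2
  have hg_nonneg (t x : ℝ) : 0 ≤ g t x := by
    have hcos := Real.cos_le_one (t * x)
    positivity
  have hg_lintegral (t : ℝ) : ∫⁻ x, ENNReal.ofReal (g t x) ∂μ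
      = ENNReal.ofReal (2 * (1 - charFun μ t).re / t ^ 2) := by
    rw [← ofReal_integral_eq_lintegral_ofReal _ (.of_forall (hg_nonneg t))]
    · simp only [g, div_eq_mul_inv, integral_mul_const, integral_const_mul,
        integral_one_sub_cos_eq_re_one_sub_charFun]
    · exact (((integrable_const _).sub (integrable_cos_mul t)).const_mul 2).div_const _
  have hg_tendsto (x : ℝ) :
      Tendsto (fun t => ENNReal.ofReal (g t x)) (𝓝[≠] 0) (𝓝 (‖x‖ₑ ^ 2)) := by
    rw [← ofReal_norm, ← ENNReal.ofReal_pow (norm_nonneg x), Real.norm_eq_abs, sq_abs]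
    exact (ENNReal.continuous_ofReal.tendsto _).comp (tendsto_two_mul_one_sub_cos_div_sq x)
  calc ∫⁻ x, ‖x‖ₑ ^ 2 ∂μ = ∫⁻ x, liminf (fun t => ENNReal.ofReal (g t x)) (𝓝[≠] 0) ∂μ :=
        lintegral_congr fun x => (hg_tendsto x).liminf_eq.symm
    _ ≤ liminf (fun t => ∫⁻ x, ENNReal.ofReal (g t x) ∂μ) (𝓝[≠] 0) :=
        lintegral_liminf_le fun t => by unfold g; fun_prop
    _ ≤ ENNReal.ofReal (2 * K) := by
        refine liminf_le_of_frequently_le'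
          ((h.and self_mem_nhdsWithin).frequently.mono fun t ⟨ht, ht0⟩ => ?_)
        have ht0 : t ≠ 0 := ht0
        rw [hg_lintegral]
        refine ENNReal.ofReal_le_ofReal ?_
        rw [div_le_iff₀ (by positivity)]
        linarith

lemma sq_eLpNorm_two {α ε : Type*} [MeasurableSpace α] [ENorm ε] {μ : Measure α} (f : α → ε) :
    eLpNorm f 2 μ ^ 2 = ∫⁻ x, ‖f x‖ₑ ^ 2 ∂μ := by
  simpa using eLpNorm_nnreal_pow_eq_lintegral (f := f) (μ := μ) (p := 2) two_ne_zero

def HasLevyCharFun {n : ℕ} (ν : Measure ℝ) (P : Measure (WNSpace n)) : Prop :=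
  ∀ φ : SchwartzMap (En n) ℝ,
    ∫ ω : WNSpace n, Complex.exp (Complex.I * (ω φ : ℝ)) ∂P
      = Complex.exp (∫ x : En n, levyExponent ν (φ x))

instance (n : ℕ) : BorelSpace (WNSpace n) := ⟨rfl⟩

section WhiteNoise

variable {n : ℕ} {ν : Measure ℝ} {P : Measure (WNSpace n)}

lemma charFun_map_pairing (hP : HasLevyCharFun ν P) (θ : SchwartzMap (En n) ℝ) (t : ℝ) :
    charFun (P.map fun ω : WNSpace n => ω θ) t = exp (∫ x, levyExponent ν (t * θ x)) := by
  rw [charFun_apply_real, integral_map (WeakDual.eval_continuous θ).aemeasurable (by fun_prop)]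
  convert hP (t • θ) using 3 with ω
  · simp [mul_comm]
  · rfl

variable [IsProbabilityMeasure P]

lemma lintegral_sq_pairing_le (hM : Integrable (fun z : ℝ => z ^ 2) ν) (hP : HasLevyCharFun ν P)
    (θ : SchwartzMap (En n) ℝ) :
    ∫⁻ ω, ‖ω θ‖ₑ ^ 2 ∂P ≤ ENNReal.ofReal (8 * ∫ z, z ^ 2 ∂ν) * ∫⁻ x, ‖θ x‖ₑ ^ 2 := by
  set M := ∫ z, z ^ 2 ∂ν
  set S := ∫ x, θ x ^ 2
  have hθ : Integrable (fun x => θ x ^ 2) := (θ.memLp 2).integrable_sq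
  have hX : Measurable fun ω : WNSpace n => ω θ := (WeakDual.eval_continuous θ).measurable
  have := Measure.isProbabilityMeasure_map (μ := P) hX.aemeasurable
  have hre (t : ℝ) : (1 - charFun (P.map fun ω : WNSpace n => ω θ) t).re ≤ 4 * M * S * t ^ 2 := by
    have hnorm := norm_charFun_le_one (μ := P.map fun ω : WNSpace n => ω θ) t
    rw [charFun_map_pairing hP] at hnorm ⊢
    have hA := norm_integral_levyExponent_le (g := fun x => t * θ x) hM
      (by simpa only [mul_pow] using hθ.const_mul (t ^ 2))
    simp only [mul_pow, integral_const_mul] at hA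
    linarith [re_one_sub_exp_le hnorm]
  have h := lintegral_sq_le_of_re_one_sub_charFun_le (.of_forall hre)
  rw [lintegral_map (by fun_prop) hX] at h
  have hS : ENNReal.ofReal S = ∫⁻ x, ‖θ x‖ₑ ^ 2 := by
    rw [ofReal_integral_eq_lintegral_ofReal hθ (.of_forall fun x => sq_nonneg _)]
    refine lintegral_congr fun x => ?_
    rw [← ofReal_norm, ← ENNReal.ofReal_pow (norm_nonneg _), Real.norm_eq_abs, sq_abs]
  calc ∫⁻ ω, ‖ω θ‖ₑ ^ 2 ∂P ≤ ENNReal.ofReal (2 * (4 * M * S)) := h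
    _ = ENNReal.ofReal (8 * M) * ∫⁻ x, ‖θ x‖ₑ ^ 2 := by
      rw [← hS, ← ENNReal.ofReal_mul (by positivity)]
      ring_nf

lemma eLpNorm_pairing_le (hM : Integrable (fun z : ℝ => z ^ 2) ν) (hP : HasLevyCharFun ν P)
    (θ : SchwartzMap (En n) ℝ) :
    eLpNorm (fun ω : WNSpace n => ω θ) 2 P
      ≤ ENNReal.ofReal √(8 * ∫ z, z ^ 2 ∂ν) * eLpNorm θ 2 volume := by
  have hM0 : 0 ≤ 8 * ∫ z, z ^ 2 ∂ν := by positivity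
  refine (ENNReal.pow_le_pow_left_iff two_ne_zero).1 ?_
  rw [mul_pow, sq_eLpNorm_two, sq_eLpNorm_two, ← ENNReal.ofReal_pow (Real.sqrt_nonneg _),
    Real.sq_sqrt hM0]
  exact lintegral_sq_pairing_le hM hP θ

lemma eLpNorm_pairing_sub_le (hM : Integrable (fun z : ℝ => z ^ 2) ν) (hP : HasLevyCharFun ν P)
    {f : En n → ℝ} (hf : AEStronglyMeasurable f volume) (θ₁ θ₂ : SchwartzMap (En n) ℝ) :
    eLpNorm (fun ω : WNSpace n => ω θ₁ - ω θ₂) 2 P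
      ≤ ENNReal.ofReal √(8 * ∫ z, z ^ 2 ∂ν)
        * (eLpNorm (fun x => θ₁ x - f x) 2 volume + eLpNorm (fun x => θ₂ x - f x) 2 volume) := by
  simp_rw [← map_sub]
  refine (eLpNorm_pairing_le hM hP (θ₁ - θ₂)).trans ?_
  gcongr
  have hsplit : ⇑(θ₁ - θ₂) = (fun x => θ₁ x - f x) - (fun x => θ₂ x - f x) := by
    ext x
    simp
  rw [hsplit]
  exact eLpNorm_sub_le (θ₁.continuous.aestronglyMeasurable.sub hf)
    (θ₂.continuous.aestronglyMeasurable.sub hf) one_le_two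

end WhiteNoise

lemma tendsto_zero_of_le_const_mul_add {ι : Type*} {l : Filter ι} {d a b : ι → ENNReal}
    {C : ENNReal} (hC : C ≠ ⊤) (ha : Tendsto a l (𝓝 0)) (hb : Tendsto b l (𝓝 0))
    (hd : ∀ i, d i ≤ C * (a i + b i)) : Tendsto d l (𝓝 0) := by
  have h : Tendsto (fun i => C * (a i + b i)) l (𝓝 0) := by
    simpa using ENNReal.Tendsto.const_mul (ha.add hb) (Or.inr hC)
  exact tendsto_of_tendsto_of_tendsto_of_le_of_le tendsto_const_nhds h (fun _ => zero_le) hd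

theorem pairing_cauchy_and_limit_independent_of_approximation_general
    (n : ℕ)
    (ν : Measure ℝ)
    (hM : Integrable (fun z : ℝ => z ^ 2) ν)
    (P : Measure (WNSpace n)) [IsProbabilityMeasure P]
    (hBM : ∀ φ : SchwartzMap (En n) ℝ,
      ∫ ω : WNSpace n, Complex.exp (Complex.I * (ω φ : ℝ)) ∂P
        = Complex.exp (∫ x : En n, levyExponent ν (φ x)))
    (f : En n → ℝ) (hf : MemLp f 2 (volume : Measure (En n)))
    (φ : ℕ → SchwartzMap (En n) ℝ)
    (hφ : Filter.Tendsto (fun k => eLpNorm (fun x => φ k x - f x) 2 (volume : Measure (En n)))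
      Filter.atTop (nhds 0)) :
    -- (⟨·, φ_k⟩)_k is a Cauchy sequence in L²(Ω, P):
    (∀ ε : ENNReal, 0 < ε → ∃ N : ℕ, ∀ k l : ℕ, N ≤ k → N ≤ l →
        eLpNorm (fun ω : WNSpace n => ω (φ k) - ω (φ l)) 2 P < ε) ∧
    -- the L²(P)-limit does not depend on the approximating sequence:
    (∀ ψ : ℕ → SchwartzMap (En n) ℝ,
      Filter.Tendsto (fun k => eLpNorm (fun x => ψ k x - f x) 2 (volume : Measure (En n)))
        Filter.atTop (nhds 0) →
      Filter.Tendsto (fun k => eLpNorm (fun ω : WNSpace n => ω (φ k) - ω (ψ k)) 2 P)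
        Filter.atTop (nhds 0)) := by
  have hdiff := eLpNorm_pairing_sub_le hM hBM hf.aestronglyMeasurable
  have hC : ENNReal.ofReal √(8 * ∫ z, z ^ 2 ∂ν) ≠ ⊤ := ENNReal.ofReal_ne_top
  refine ⟨fun ε hε => ?_, fun ψ hψ => tendsto_zero_of_le_const_mul_add hC hφ hψ fun k =>
    hdiff (φ k) (ψ k)⟩
  have hpairs : Tendsto (fun p : ℕ × ℕ => eLpNorm (fun ω : WNSpace n => ω (φ p.1) - ω (φ p.2)) 2 P)
      atTop (𝓝 0) := by
    rw [← prod_atTop_atTop_eq]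
    exact tendsto_zero_of_le_const_mul_add hC (hφ.comp tendsto_fst) (hφ.comp tendsto_snd)
      fun p => hdiff (φ p.1) (φ p.2)
  exact eventually_atTop_prod_self.1 (hpairs.eventually (gt_mem_nhds hε))

theorem pairing_cauchy_and_limit_independent_of_approximation
    (n : ℕ) (hn : 1 ≤ n)
    (ν : Measure ℝ) (hν0 : ν {0} = 0)
    (hM : Integrable (fun z : ℝ => z ^ 2) ν)
    (P : Measure (WNSpace n)) [IsProbabilityMeasure P]
    (hBM : ∀ φ : SchwartzMap (En n) ℝ,
      ∫ ω : WNSpace n, Complex.exp (Complex.I * (ω φ : ℝ)) ∂P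
        = Complex.exp (∫ x : En n, levyExponent ν (φ x)))
    (f : En n → ℝ) (hf : MemLp f 2 (volume : Measure (En n)))
    (φ : ℕ → SchwartzMap (En n) ℝ)
    (hφ : Filter.Tendsto (fun k => eLpNorm (fun x => φ k x - f x) 2 (volume : Measure (En n)))
      Filter.atTop (nhds 0)) :
    -- (⟨·, φ_k⟩)_k is a Cauchy sequence in L²(Ω, P):
    (∀ ε : ENNReal, 0 < ε → ∃ N : ℕ, ∀ k l : ℕ, N ≤ k → N ≤ l →
        eLpNorm (fun ω : WNSpace n => ω (φ k) - ω (φ l)) 2 P < ε) ∧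
    -- the L²(P)-limit does not depend on the approximating sequence:
    (∀ ψ : ℕ → SchwartzMap (En n) ℝ,
      Filter.Tendsto (fun k => eLpNorm (fun x => ψ k x - f x) 2 (volume : Measure (En n)))
        Filter.atTop (nhds 0) →
      Filter.Tendsto (fun k => eLpNorm (fun ω : WNSpace n => ω (φ k) - ω (ψ k)) 2 P)
        Filter.atTop (nhds 0)) :=
  pairing_cauchy_and_limit_independent_of_approximation_general n ν hM P hBM f hf φ hφ
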